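/- Let w : ℝ → ℝ³ be twice differentiable with a := w′, b := w″ and w(t) ≠ 0 for all t, and define α_a := (ŵ·a)/|w|, 𝛘_a := (ŵ×a)/|w| and 𝛘_b := (ŵ×b)/|w| where ŵ := w/|w|. Then 𝛘_a is differentiable and satisfies d𝛘_a/dt = −2α_a 𝛘_a + 𝛘_b. -/

import Mathlib

/-!
Writing `𝛘_a = |w|⁻² (w × a)`, the claim is the product rule: `w × a` has derivative
`a × a + w × b = w × b`, and `|w|⁻²` has derivative `-2 (w·a) |w|⁻⁴`.
-/

open Matrix

/-- Euclidean magnitude of a vector in ℝ³. -/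
noncomputable def mag (v : Fin 3 → ℝ) : ℝ := Real.sqrt (v ⬝ᵥ v)

/-- The unit tangent vector `ŵ := w/|w|` of a curve `w : ℝ → ℝ³`. -/
noncomputable def uhat (w : ℝ → Fin 3 → ℝ) (t : ℝ) : Fin 3 → ℝ := (mag (w t))⁻¹ • w t

/-- The growth rate `α_a := (ŵ·a)/|w|`, where `a := w′`. -/
noncomputable def alphaA (w : ℝ → Fin 3 → ℝ) (t : ℝ) : ℝ :=
  (uhat w t ⬝ᵥ deriv w t) / mag (w t)

/-- The swing rate `𝛘_a := (ŵ×a)/|w|`, where `a := w′`. -/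
noncomputable def chiA (w : ℝ → Fin 3 → ℝ) (t : ℝ) : Fin 3 → ℝ :=
  (mag (w t))⁻¹ • (uhat w t ⨯₃ deriv w t)

/-- `α_b := (ŵ·b)/|w|`, where `b := w″`. -/
noncomputable def alphaB (w : ℝ → Fin 3 → ℝ) (t : ℝ) : ℝ :=
  (uhat w t ⬝ᵥ deriv (deriv w) t) / mag (w t)

/-- `𝛘_b := (ŵ×b)/|w|`, where `b := w″`. -/
noncomputable def chiB (w : ℝ → Fin 3 → ℝ) (t : ℝ) : Fin 3 → ℝ :=
  (mag (w t))⁻¹ • (uhat w t ⨯₃ deriv (deriv w) t)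

/-- The unit vector `𝛘̂_a := 𝛘_a/|𝛘_a|`. -/
noncomputable def chiAhat (w : ℝ → Fin 3 → ℝ) (t : ℝ) : Fin 3 → ℝ :=
  (mag (chiA w t))⁻¹ • chiA w t

/-- The scalar `c_b := ŵ·(𝛘̂_a×𝛘_b)`. -/
noncomputable def cB (w : ℝ → Fin 3 → ℝ) (t : ℝ) : ℝ :=
  uhat w t ⬝ᵥ (chiAhat w t ⨯₃ chiB w t)

/-- The scalar `d_b := −(𝛘̂_a·𝛘_b)`. -/
noncomputable def dB (w : ℝ → Fin 3 → ℝ) (t : ℝ) : ℝ :=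
  -(chiAhat w t ⬝ᵥ chiB w t)

/-- The Darboux angular velocity vector `𝒟 := 𝛘_a + (c_b/|𝛘_a|) ŵ`. -/
noncomputable def darboux (w : ℝ → Fin 3 → ℝ) (t : ℝ) : Fin 3 → ℝ :=
  chiA w t + (cB w t / mag (chiA w t)) • uhat w t

section Calculus

variable {𝕜 : Type*} [NontriviallyNormedField 𝕜] [CompleteSpace 𝕜] {x : 𝕜}

theorem HasDerivAt.dotProduct {ι : Type*} [Fintype ι] {u v : 𝕜 → ι → 𝕜} {u' v' : ι → 𝕜}
    (hu : HasDerivAt u u' x) (hv : HasDerivAt v v' x) :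
    HasDerivAt (fun y ↦ u y ⬝ᵥ v y) (u x ⬝ᵥ v' + u' ⬝ᵥ v x) x :=
  (dotProductBilin 𝕜 𝕜 : (ι → 𝕜) →ₗ[𝕜] _ →ₗ[𝕜] 𝕜).toContinuousBilinearMap.hasDerivAt_of_bilinear
    (fun _ ↦ hu) (fun _ ↦ hv)

theorem HasDerivAt.cross {u v : 𝕜 → Fin 3 → 𝕜} {u' v' : Fin 3 → 𝕜}
    (hu : HasDerivAt u u' x) (hv : HasDerivAt v v' x) :
    HasDerivAt (fun y ↦ u y ⨯₃ v y) (u x ⨯₃ v' + u' ⨯₃ v x) x :=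
  (crossProduct : (Fin 3 → 𝕜) →ₗ[𝕜] _ →ₗ[𝕜] _).toContinuousBilinearMap.hasDerivAt_of_bilinear
    (fun _ ↦ hu) (fun _ ↦ hv)

end Calculus

theorem hasDerivAt_inv_dotProduct_self_smul_cross {u v : ℝ → Fin 3 → ℝ} {b : Fin 3 → ℝ} {t : ℝ}
    (hu : HasDerivAt u (v t) t) (hv : HasDerivAt v b t) (hu₀ : u t ≠ 0) :
    HasDerivAt (fun s ↦ (u s ⬝ᵥ u s)⁻¹ • (u s ⨯₃ v s))
      ((-2 * ((u t ⬝ᵥ v t) / (u t ⬝ᵥ u t))) • ((u t ⬝ᵥ u t)⁻¹ • (u t ⨯₃ v t))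
        + (u t ⬝ᵥ u t)⁻¹ • (u t ⨯₃ b)) t := by
  have hsq : u t ⬝ᵥ u t ≠ 0 := mt dotProduct_self_eq_zero.mp hu₀
  refine (((hu.dotProduct hu).inv hsq).smul (hu.cross hv)).congr_deriv ?_
  rw [dotProduct_comm (v t), cross_self, add_zero, add_comm, smul_smul]
  congr 2
  field_simp
  ring

theorem mag_sq (v : Fin 3 → ℝ) : mag v ^ 2 = v ⬝ᵥ v :=
  Real.sq_sqrt (by simpa using dotProduct_self_star_nonneg v)

theorem inv_mag_smul_uhat_cross (w : ℝ → Fin 3 → ℝ) (t : ℝ) (v : Fin 3 → ℝ) :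
    (mag (w t))⁻¹ • (uhat w t ⨯₃ v) = (w t ⬝ᵥ w t)⁻¹ • (w t ⨯₃ v) := by
  rw [uhat, map_smul, LinearMap.smul_apply, smul_smul, ← mul_inv, ← sq, mag_sq]

theorem alphaA_eq (w : ℝ → Fin 3 → ℝ) (t : ℝ) :
    alphaA w t = (w t ⬝ᵥ deriv w t) / (w t ⬝ᵥ w t) := by
  rw [alphaA, uhat, smul_dotProduct, smul_eq_mul, ← mag_sq]
  field_simp

/-- For a twice differentiable nonvanishing curve `w : ℝ → ℝ³`,
the swing rate satisfies `d𝛘_a/dt = −2α_a 𝛘_a + 𝛘_b`. -/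
theorem deriv_chiA (w : ℝ → Fin 3 → ℝ)
    (hd : Differentiable ℝ w) (hd' : Differentiable ℝ (deriv w))
    (hw : ∀ t, w t ≠ 0) (t : ℝ) :
    HasDerivAt (chiA w) ((-2 * alphaA w t) • chiA w t + chiB w t) t := by
  have hchiA : chiA w = fun s ↦ (w s ⬝ᵥ w s)⁻¹ • (w s ⨯₃ deriv w s) :=
    funext fun s ↦ inv_mag_smul_uhat_cross w s _
  rw [chiB, inv_mag_smul_uhat_cross, alphaA_eq, hchiA]
  exact hasDerivAt_inv_dotProduct_self_smul_cross (hd t).hasDerivAt (hd' t).hasDerivAt (hw t)
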